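/- Let E be an elliptic curve over a field K given by y² = x³ + αx² + βx, let E′: y² = x³ − 2αx² + (α² − 4β)x, and let δ: E′(K) → K×/(K×)² be the map sending O to 1, (0,0) to the class of α² − 4β, and any other point (x,y) to the class of x. Then δ is a group homomorphism. -/

import Mathlib

/-!
If a line `y = ℓx + ν` meets `y² = x³ + ax² + bx` in `P`, `Q` and `-(P + Q)`, their
`x`-coordinates are the roots of `x³ + ax² + bx - (ℓx + ν)²`, so by Vieta
`x₁x₂x₃ = ν²` and `x₁x₂ + x₁x₃ + x₂x₃ = b - 2ℓν`. If no `xᵢ` vanishes the first relation makes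
`x₁x₂x₃` a square; if one does, then `ν = 0` and the second relation says the other two
multiply to `b`, so the product of the three values of `δ` is `b²`. As every square class has
order two and `-(P + Q)` has the same `x`-coordinate as `P + Q`, `δ(P + Q) = δ(P) δ(Q)`.
-/

lemma quotient_squares_mul_self {G : Type*} [CommGroup G]
    (c : G ⧸ (powMonoidHom 2 : G →* G).range) : c * c = 1 := by
  induction c using QuotientGroup.induction_on with
  | H u => rw [← QuotientGroup.mk_mul, QuotientGroup.eq_one_iff]; exact ⟨u, sq u⟩

section

variable {K : Type*} [Field K]

open scoped Classical in
noncomputable def squareClass (x : K) : Kˣ ⧸ (powMonoidHom 2 : Kˣ →* Kˣ).range :=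
  if hx : x = 0 then 1 else QuotientGroup.mk (Units.mk0 x hx)

lemma squareClass_of_ne_zero {x : K} (hx : x ≠ 0) :
    squareClass x = QuotientGroup.mk (Units.mk0 x hx) :=
  dif_neg hx

lemma squareClass_mul {x y : K} (hx : x ≠ 0) (hy : y ≠ 0) :
    squareClass (x * y) = squareClass x * squareClass y := by
  rw [squareClass_of_ne_zero hx, squareClass_of_ne_zero hy,
    squareClass_of_ne_zero (mul_ne_zero hx hy), ← QuotientGroup.mk_mul, Units.mk0_mul]

lemma squareClass_sq (r : K) : squareClass (r ^ 2) = 1 := by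
  rcases eq_or_ne r 0 with rfl | hr
  · simp [squareClass]
  · rw [squareClass_of_ne_zero (pow_ne_zero 2 hr), QuotientGroup.eq_one_iff]
    exact ⟨Units.mk0 r hr, Units.ext (by simp)⟩

lemma squareClass_eq_mul_of_mul_mul_eq_sq {x y z r : K} (hx : x ≠ 0) (hy : y ≠ 0)
    (hz : z ≠ 0) (h : x * y * z = r ^ 2) : squareClass z = squareClass x * squareClass y := by
  have hxyz : squareClass x * squareClass y * squareClass z = 1 := by
    rw [← squareClass_mul hx hy, ← squareClass_mul (mul_ne_zero hx hy) hz, h, squareClass_sq]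
  exact (eq_inv_of_mul_eq_one_right hxyz).trans
    (inv_eq_of_mul_eq_one_right (quotient_squares_mul_self _))

open scoped Classical in
/-- The representative in `K` of `δ` at a point with `x`-coordinate `x`, for the curve
`y² = x³ + ax² + bx`: `x` itself, or `b` at the `2`-torsion point `(0, 0)`. -/
noncomputable def descentX (b x : K) : K :=
  if x = 0 then b else x

lemma descentX_ne_zero {b : K} (hb : b ≠ 0) (x : K) : descentX b x ≠ 0 := by
  unfold descentX
  split_ifs with hx
  exacts [hb, hx]

lemma descentX_mul_mul_eq_sq_of_eq_zero {b x₁ x₂ x₃ ℓ ν : K} (hb : b ≠ 0) (h₁ : x₁ = 0)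
    (hprod : x₁ * x₂ * x₃ = ν ^ 2) (hsum : x₁ * x₂ + x₁ * x₃ + x₂ * x₃ = b - 2 * ℓ * ν) :
    descentX b x₁ * descentX b x₂ * descentX b x₃ = b ^ 2 := by
  subst h₁
  have hν : ν = 0 := pow_eq_zero_iff two_ne_zero |>.mp (by linear_combination -hprod)
  subst hν
  have hb' : x₂ * x₃ = b := by linear_combination hsum
  have hx₂ : x₂ ≠ 0 := left_ne_zero_of_mul (hb' ▸ hb)
  have hx₃ : x₃ ≠ 0 := right_ne_zero_of_mul (hb' ▸ hb)
  unfold descentX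
  rw [if_pos rfl, if_neg hx₂, if_neg hx₃]
  linear_combination b * hb'

lemma exists_descentX_mul_mul_eq_sq {b x₁ x₂ x₃ ℓ ν : K} (hb : b ≠ 0)
    (hprod : x₁ * x₂ * x₃ = ν ^ 2) (hsum : x₁ * x₂ + x₁ * x₃ + x₂ * x₃ = b - 2 * ℓ * ν) :
    ∃ r, descentX b x₁ * descentX b x₂ * descentX b x₃ = r ^ 2 := by
  by_cases h₁ : x₁ = 0
  · exact ⟨b, descentX_mul_mul_eq_sq_of_eq_zero hb h₁ hprod hsum⟩
  by_cases h₂ : x₂ = 0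
  · refine ⟨b, ?_⟩
    rw [mul_comm (descentX b x₁)]
    exact descentX_mul_mul_eq_sq_of_eq_zero (x₂ := x₁) (ℓ := ℓ) (ν := ν) hb h₂
      (by linear_combination hprod) (by linear_combination hsum)
  by_cases h₃ : x₃ = 0
  · refine ⟨b, ?_⟩
    rw [mul_comm, ← mul_assoc]
    exact descentX_mul_mul_eq_sq_of_eq_zero (x₂ := x₁) (x₃ := x₂) (ℓ := ℓ) (ν := ν) hb h₃
      (by linear_combination hprod) (by linear_combination hsum)
  refine ⟨ν, ?_⟩
  unfold descentX
  rw [if_neg h₁, if_neg h₂, if_neg h₃]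
  exact hprod

namespace WeierstrassCurve.Affine

variable {W : WeierstrassCurve.Affine K}

/-- Vieta's formulas for the roots `x₁`, `x₂`, `addX` of `addPolynomial`, in terms of the slope
`ℓ` and the intercept `y₁ - ℓx₁` of the line through the two points. -/
lemma vieta_addX_slope [DecidableEq K] {x₁ x₂ y₁ y₂ : K} (h₁ : W.Equation x₁ y₁)
    (h₂ : W.Equation x₂ y₂) (hxy : ¬(x₁ = x₂ ∧ y₁ = W.negY x₂ y₂)) :
    x₁ * x₂ * W.addX x₁ x₂ (W.slope x₁ x₂ y₁ y₂) =
        (y₁ - W.slope x₁ x₂ y₁ y₂ * x₁) ^ 2 + W.a₃ * (y₁ - W.slope x₁ x₂ y₁ y₂ * x₁) - W.a₆ ∧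
      x₁ * x₂ + x₁ * W.addX x₁ x₂ (W.slope x₁ x₂ y₁ y₂) +
          x₂ * W.addX x₁ x₂ (W.slope x₁ x₂ y₁ y₂) =
        W.a₄ - (W.a₁ + 2 * W.slope x₁ x₂ y₁ y₂) * (y₁ - W.slope x₁ x₂ y₁ y₂ * x₁) -
          W.a₃ * W.slope x₁ x₂ y₁ y₂ := by
  have h := addPolynomial_slope h₁ h₂ hxy
  rw [addPolynomial_eq, Cubic.prod_X_sub_C_eq, neg_inj, Cubic.toPoly_injective] at h
  obtain ⟨-, -, hc, hd⟩ := Cubic.mk.inj h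
  exact ⟨by linear_combination hd, by linear_combination -hc⟩

lemma Y_eq_zero_of_equation_zero (ha₃ : W.a₃ = 0) (ha₆ : W.a₆ = 0) {y : K}
    (h : W.Equation 0 y) : y = 0 := by
  rw [equation_iff, ha₃, ha₆] at h
  exact pow_eq_zero_iff two_ne_zero |>.mp (by linear_combination h)

variable (W) in
noncomputable def descentMap : W.Point → Kˣ ⧸ (powMonoidHom 2 : Kˣ →* Kˣ).range
  | .zero => 1
  | @Point.some _ _ _ x _ _ => squareClass (descentX W.a₄ x)

theorem descentMap_add [DecidableEq K] (ha₁ : W.a₁ = 0) (ha₃ : W.a₃ = 0) (ha₆ : W.a₆ = 0)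
    (ha₄ : W.a₄ ≠ 0) (P Q : W.Point) :
    W.descentMap (P + Q) = W.descentMap P * W.descentMap Q := by
  rcases P with _ | @⟨x₁, y₁, h₁⟩
  · rw [← Point.zero_def, zero_add]
    exact (one_mul (W.descentMap _)).symm
  rcases Q with _ | @⟨x₂, y₂, h₂⟩
  · rw [← Point.zero_def, add_zero]
    exact (mul_one (W.descentMap _)).symm
  by_cases hxy : x₁ = x₂ ∧ y₁ = W.negY x₂ y₂
  · obtain ⟨rfl, hy⟩ := hxy
    rw [Point.add_of_Y_eq rfl hy]
    exact (quotient_squares_mul_self _).symm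
  rw [Point.add_some hxy]
  obtain ⟨hprod, hsum⟩ := vieta_addX_slope h₁.1 h₂.1 hxy
  simp only [ha₁, ha₃, ha₆, zero_mul, zero_add, add_zero, sub_zero] at hprod hsum
  obtain ⟨r, hr⟩ := exists_descentX_mul_mul_eq_sq ha₄ hprod hsum
  exact squareClass_eq_mul_of_mul_mul_eq_sq (descentX_ne_zero ha₄ _) (descentX_ne_zero ha₄ _)
    (descentX_ne_zero ha₄ _) hr

theorem eq_descentMap (ha₃ : W.a₃ = 0) (ha₆ : W.a₆ = 0)
    {f : W.Point → Kˣ ⧸ (powMonoidHom 2 : Kˣ →* Kˣ).range} (hf₀ : f 0 = 1)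
    (hf₀₀ : ∀ h : W.Nonsingular 0 0, f (.some _ _ h) = squareClass W.a₄)
    (hf : ∀ (x y : K) (h : W.Nonsingular x y), x ≠ 0 → f (.some _ _ h) = squareClass x) :
    f = W.descentMap := by
  funext P
  rcases P with _ | @⟨x, y, h⟩
  · exact hf₀
  by_cases hx : x = 0
  · subst hx
    obtain rfl := Y_eq_zero_of_equation_zero ha₃ ha₆ h.1
    simp only [descentMap, descentX]
    exact hf₀₀ h
  · simp only [descentMap, descentX, if_neg hx]
    exact hf x y h hx

end WeierstrassCurve.Affine

end

open scoped Classical in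
theorem stmt_16_general {K : Type*} [Field K] (α β : K)
    (hd : α ^ 2 - 4 * β ≠ 0) :
    ∀ W' : WeierstrassCurve K,
      W' = { a₁ := 0, a₂ := -2 * α, a₃ := 0, a₄ := α ^ 2 - 4 * β, a₆ := 0 } →
      ∀ f : W'.toAffine.Point → Kˣ ⧸ (powMonoidHom 2 : Kˣ →* Kˣ).range,
        f 0 = 1 →
        (∀ h00 : W'.toAffine.Nonsingular 0 0,
          f (WeierstrassCurve.Affine.Point.some 0 0 h00) =
            QuotientGroup.mk (Units.mk0 (α ^ 2 - 4 * β) hd)) →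
        (∀ (x y : K) (hxy : W'.toAffine.Nonsingular x y) (hx : x ≠ 0),
          f (WeierstrassCurve.Affine.Point.some x y hxy) = QuotientGroup.mk (Units.mk0 x hx)) →
        ∀ P Q : W'.toAffine.Point, f (P + Q) = f P * f Q := by
  rintro W' rfl f hf₀ hf₀₀ hf P Q
  obtain rfl : f = WeierstrassCurve.Affine.descentMap _ :=
    WeierstrassCurve.Affine.eq_descentMap rfl rfl hf₀
      (fun h ↦ (hf₀₀ h).trans (squareClass_of_ne_zero hd).symm)
      (fun x y h hx ↦ (hf x y h hx).trans (squareClass_of_ne_zero hx).symm)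
  exact WeierstrassCurve.Affine.descentMap_add rfl rfl rfl hd P Q

open scoped Classical in
/-- For `E : y² = x³ + αx² + βx` and `E′ : y² = x³ - 2αx² + (α² - 4β)x` over a field `K`
with `β(α² - 4β) ≠ 0`, the map `δ : E′(K) → K×/(K×)²` sending `O ↦ 1`, `(0,0) ↦ α² - 4β`,
and any other point `(x, y) ↦ x`, is a group homomorphism. -/
theorem stmt_16 {K : Type*} [Field K] (α β : K) (hβ : β * (α ^ 2 - 4 * β) ≠ 0)
    (hd : α ^ 2 - 4 * β ≠ 0) :
    ∀ W' : WeierstrassCurve K,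
      W' = { a₁ := 0, a₂ := -2 * α, a₃ := 0, a₄ := α ^ 2 - 4 * β, a₆ := 0 } →
      ∀ f : W'.toAffine.Point → Kˣ ⧸ (powMonoidHom 2 : Kˣ →* Kˣ).range,
        f 0 = 1 →
        (∀ h00 : W'.toAffine.Nonsingular 0 0,
          f (WeierstrassCurve.Affine.Point.some 0 0 h00) =
            QuotientGroup.mk (Units.mk0 (α ^ 2 - 4 * β) hd)) →
        (∀ (x y : K) (hxy : W'.toAffine.Nonsingular x y) (hx : x ≠ 0),
          f (WeierstrassCurve.Affine.Point.some x y hxy) = QuotientGroup.mk (Units.mk0 x hx)) →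
        ∀ P Q : W'.toAffine.Point, f (P + Q) = f P * f Q :=
  stmt_16_general α β hd
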